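/- (Compressible cone bound) Let q ∈ (1,∞), x ∈ R^N nonzero, S an index set with |S| ≤ k, and h ∈ R^N satisfying ‖x+h‖₁·‖x‖_q ≤ ‖x‖₁·‖x+h‖_q. Then ‖h‖₁ ≤ (2k^{1−1/q} + s_q(x)^{1−1/q})‖h‖_q + 2‖x_{Sᶜ}‖₁. -/
import Mathlib


open Finset

/-- The `ℓ_q` quasi-norm `(∑ |z i|^q)^(1/q)` on `Fin N → ℝ`. -/
noncomputable def lqNorm {N : ℕ} (q : ℝ) (z : Fin N → ℝ) : ℝ :=
  (∑ i, |z i| ^ q) ^ (1 / q)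

/-- The `ℓ_1` norm. -/
noncomputable def l1Norm {N : ℕ} (z : Fin N → ℝ) : ℝ := ∑ i, |z i|

/-- The `ℓ_2` norm. -/
noncomputable def l2Norm {N : ℕ} (z : Fin N → ℝ) : ℝ := Real.sqrt (∑ i, (z i) ^ 2)

/-- The `q`-ratio sparsity `s_q(z) = (‖z‖₁/‖z‖_q)^(q/(q-1))`. -/
noncomputable def qSparsity {N : ℕ} (q : ℝ) (z : Fin N → ℝ) : ℝ :=
  (l1Norm z / lqNorm q z) ^ (q / (q - 1))

/-- Number of nonzero entries. -/
noncomputable def l0Norm {N : ℕ} (z : Fin N → ℝ) : ℕ :=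
  (Finset.univ.filter fun i => z i ≠ 0).card

/-- Restriction of `z` to an index set `S` (zero outside `S`). -/
noncomputable def restr {N : ℕ} (z : Fin N → ℝ) (S : Finset (Fin N)) : Fin N → ℝ :=
  fun i => if i ∈ S then z i else 0

lemma lqNorm_nonneg' {N : ℕ} (q : ℝ) (z : Fin N → ℝ) : 0 ≤ lqNorm q z :=
  Real.rpow_nonneg (Finset.sum_nonneg fun i _ => Real.rpow_nonneg (abs_nonneg _) q) _

lemma lqNorm_pos' {N : ℕ} {q : ℝ} (hq : 0 < q) {z : Fin N → ℝ} (hz : z ≠ 0) :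
    0 < lqNorm q z := by
  obtain ⟨i, hi⟩ : ∃ i, z i ≠ 0 := by
    by_contra hc
    push_neg at hc
    exact hz (funext hc)
  apply Real.rpow_pos_of_pos
  calc (0:ℝ) < |z i| ^ q := Real.rpow_pos_of_pos (abs_pos.mpr hi) q
    _ ≤ ∑ j, |z j| ^ q := Finset.single_le_sum
        (fun j _ => Real.rpow_nonneg (abs_nonneg _) q) (Finset.mem_univ i)

/-- Hölder with the cardinality: `∑_{i ∈ s} |h i| ≤ |s|^(1-1/q) ‖h‖_q`. -/
lemma sum_abs_le_card_rpow_mul_lqNorm' {N : ℕ} {q : ℝ} (hq : 1 < q)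
    (s : Finset (Fin N)) (h : Fin N → ℝ) :
    ∑ i ∈ s, |h i| ≤ (s.card : ℝ) ^ (1 - 1 / q) * lqNorm q h := by
  have key := Real.inner_le_weight_mul_Lp_of_nonneg s hq.le (fun _ => (1 : ℝ))
    (fun i => |h i|) (fun _ => zero_le_one) (fun i => abs_nonneg _)
  simp only [one_mul, Finset.sum_const, nsmul_eq_mul, mul_one] at key
  have h1 : (∑ i ∈ s, |h i| ^ q) ^ q⁻¹ ≤ lqNorm q h := by
    rw [lqNorm, one_div]
    apply Real.rpow_le_rpow (Finset.sum_nonneg fun i _ => Real.rpow_nonneg (abs_nonneg _) q)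
    · exact Finset.sum_le_sum_of_subset_of_nonneg (Finset.subset_univ s)
        (fun i _ _ => Real.rpow_nonneg (abs_nonneg _) q)
    · positivity
  calc ∑ i ∈ s, |h i| ≤ (s.card : ℝ) ^ (1 - q⁻¹) * (∑ i ∈ s, |h i| ^ q) ^ q⁻¹ := key
    _ ≤ (s.card : ℝ) ^ (1 - q⁻¹) * lqNorm q h := by
        apply mul_le_mul_of_nonneg_left h1
        positivity
    _ = (s.card : ℝ) ^ (1 - 1 / q) * lqNorm q h := by rw [one_div]

/-- Minkowski. -/
lemma lqNorm_add_le' {N : ℕ} {q : ℝ} (hq : 1 ≤ q) (x h : Fin N → ℝ) :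
    lqNorm q (x + h) ≤ lqNorm q x + lqNorm q h := by
  have := Real.Lp_add_le (s := (Finset.univ : Finset (Fin N))) x h hq
  simpa [lqNorm] using this

theorem compressible_cone_bound {N : ℕ} (q : ℝ) (hq : 1 < q) (k : ℝ)
    (x : Fin N → ℝ) (hx : x ≠ 0)
    (S : Finset (Fin N)) (hcard : (S.card : ℝ) ≤ k)
    (h : Fin N → ℝ)
    (hineq : l1Norm (x + h) * lqNorm q x ≤ l1Norm x * lqNorm q (x + h)) :
    l1Norm h ≤ (2 * k ^ (1 - 1 / q) + (qSparsity q x) ^ (1 - 1 / q)) * lqNorm q h +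
      2 * l1Norm (restr x Sᶜ) := by
  have hq0 : (0:ℝ) < q := lt_trans one_pos hq
  have hxq : 0 < lqNorm q x := lqNorm_pos' hq0 hx
  have hhq : 0 ≤ lqNorm q h := lqNorm_nonneg' q h
  have hexp : 0 ≤ 1 - 1 / q := by
    have : 1 / q < 1 := by rw [div_lt_one hq0]; exact hq
    linarith
  -- restr identity
  have hrestr : l1Norm (restr x Sᶜ) = ∑ i ∈ Sᶜ, |x i| := by
    rw [l1Norm, ← Finset.sum_subset (Finset.subset_univ Sᶜ)]
    · exact Finset.sum_congr rfl fun i hi => by simp [restr, hi]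
    · intro i _ hi; simp [restr, hi]
  -- splitting
  have hsplit : ∀ z : Fin N → ℝ, l1Norm z = ∑ i ∈ S, |z i| + ∑ i ∈ Sᶜ, |z i| := by
    intro z; rw [l1Norm, Finset.sum_add_sum_compl]
  have hl1x : 0 ≤ l1Norm x := Finset.sum_nonneg fun i _ => abs_nonneg _
  -- cone bound
  have hcone : l1Norm (x + h) ≤ l1Norm x + l1Norm x / lqNorm q x * lqNorm q h := by
    have h1 : l1Norm (x + h) ≤ l1Norm x * lqNorm q (x + h) / lqNorm q x :=
      (le_div_iff₀ hxq).mpr hineq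
    have h2 : lqNorm q (x + h) ≤ lqNorm q x + lqNorm q h := lqNorm_add_le' hq.le x h
    calc l1Norm (x + h) ≤ l1Norm x * lqNorm q (x + h) / lqNorm q x := h1
      _ ≤ l1Norm x * (lqNorm q x + lqNorm q h) / lqNorm q x := by gcongr
      _ = l1Norm x + l1Norm x / lqNorm q x * lqNorm q h := by field_simp
  -- sparsity identity
  have hspars : (qSparsity q x) ^ (1 - 1 / q) = l1Norm x / lqNorm q x := by
    have hb : 0 ≤ l1Norm x / lqNorm q x := div_nonneg hl1x hxq.le
    rw [qSparsity, ← Real.rpow_mul hb]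
    have h1 : q ≠ 0 := ne_of_gt hq0
    have h2 : q - 1 ≠ 0 := sub_ne_zero.mpr (ne_of_gt hq)
    rw [show q / (q - 1) * (1 - 1 / q) = 1 by field_simp, Real.rpow_one]
  -- Hölder on S
  have hholder : ∑ i ∈ S, |h i| ≤ k ^ (1 - 1 / q) * lqNorm q h := by
    have h1 := sum_abs_le_card_rpow_mul_lqNorm' hq S h
    have h2 : (S.card : ℝ) ^ (1 - 1 / q) ≤ k ^ (1 - 1 / q) :=
      Real.rpow_le_rpow (Nat.cast_nonneg _) hcard hexp
    calc ∑ i ∈ S, |h i| ≤ (S.card : ℝ) ^ (1 - 1 / q) * lqNorm q h := h1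
      _ ≤ k ^ (1 - 1 / q) * lqNorm q h := mul_le_mul_of_nonneg_right h2 hhq
  -- termwise triangle inequalities on Sᶜ and S
  have t1 : ∑ i ∈ Sᶜ, |h i| ≤ ∑ i ∈ Sᶜ, |x i + h i| + ∑ i ∈ Sᶜ, |x i| := by
    rw [← Finset.sum_add_distrib]
    apply Finset.sum_le_sum
    intro i _
    have := abs_sub_abs_le_abs_sub (x i + h i) (x i)
    have h2 : |x i + h i - x i| = |h i| := by ring_nf
    calc |h i| = |x i + h i - x i| := by ring_nf
      _ ≤ |x i + h i| + |x i| := abs_sub (x i + h i) (x i)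
  have t2 : ∑ i ∈ S, |x i| ≤ ∑ i ∈ S, |x i + h i| + ∑ i ∈ S, |h i| := by
    rw [← Finset.sum_add_distrib]
    apply Finset.sum_le_sum
    intro i _
    calc |x i| = |x i + h i - h i| := by ring_nf
      _ ≤ |x i + h i| + |h i| := abs_sub (x i + h i) (h i)
  -- assemble
  have key : l1Norm h ≤ 2 * (∑ i ∈ S, |h i|) + (l1Norm (x + h) - l1Norm x)
      + 2 * (∑ i ∈ Sᶜ, |x i|) := by
    have e1 : l1Norm h = ∑ i ∈ S, |h i| + ∑ i ∈ Sᶜ, |h i| := hsplit h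
    have e2 : l1Norm (x + h) = ∑ i ∈ S, |x i + h i| + ∑ i ∈ Sᶜ, |x i + h i| := by
      have := hsplit (x + h); simpa using this
    have e3 : l1Norm x = ∑ i ∈ S, |x i| + ∑ i ∈ Sᶜ, |x i| := hsplit x
    linarith [t1, t2]
  calc l1Norm h ≤ 2 * (∑ i ∈ S, |h i|) + (l1Norm (x + h) - l1Norm x)
      + 2 * (∑ i ∈ Sᶜ, |x i|) := key
    _ ≤ 2 * (k ^ (1 - 1 / q) * lqNorm q h) + l1Norm x / lqNorm q x * lqNorm q h
      + 2 * (∑ i ∈ Sᶜ, |x i|) := by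
        have : l1Norm (x + h) - l1Norm x ≤ l1Norm x / lqNorm q x * lqNorm q h := by
          linarith [hcone]
        linarith [hholder, this]
    _ = (2 * k ^ (1 - 1 / q) + (qSparsity q x) ^ (1 - 1 / q)) * lqNorm q h +
      2 * l1Norm (restr x Sᶜ) := by
        rw [hspars, hrestr]; ring
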